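/- Let ρ₀ ∈ [-1,1] and define ρ_{ℓ+1} = ρ_ℓ + (1/π)·( √(1-ρ_ℓ²) − ρ_ℓ·arccos ρ_ℓ ) for ℓ ≥ 0. Then there exists a constant C > 0 (depending only on ρ₀) such that for all ℓ ≥ 1, 1 − ρ_ℓ ≤ C / ℓ². -/

import Mathlib

open Real

lemma arccos_lb {ρ : ℝ} (h1 : -1 ≤ ρ) (h2 : ρ ≤ 1) :
    Real.sqrt 2 * Real.sqrt (1 - ρ) ≤ Real.arccos ρ := by
  have hc : 1 - (Real.arccos ρ)^2/2 ≤ ρ := by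
    have := Real.one_sub_sq_div_two_le_cos (x := Real.arccos ρ)
    rwa [Real.cos_arccos h1 h2] at this
  calc Real.sqrt 2 * Real.sqrt (1-ρ) = Real.sqrt (2*(1-ρ)) :=
        (Real.sqrt_mul (by norm_num) _).symm
    _ ≤ Real.sqrt ((Real.arccos ρ)^2) := Real.sqrt_le_sqrt (by linarith)
    _ = Real.arccos ρ := Real.sqrt_sq (Real.arccos_nonneg ρ)

lemma hasDeriv_F {x : ℝ} (hx : x ∈ Set.Ioo (-1:ℝ) 1) :
    HasDerivAt (fun ρ => Real.sqrt (1-ρ^2) - ρ*Real.arccos ρ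
        - (2*Real.sqrt 2/3)*((1-ρ)*Real.sqrt (1-ρ)))
      (-Real.arccos x + Real.sqrt 2 * Real.sqrt (1-x)) x := by
  obtain ⟨hl, hr⟩ := hx
  have h2pos : 0 < 1 - x^2 := by nlinarith
  have h1pos : 0 < 1 - x := by linarith
  have s2pos : 0 < Real.sqrt (1-x^2) := Real.sqrt_pos.2 h2pos
  have s1pos : 0 < Real.sqrt (1-x) := Real.sqrt_pos.2 h1pos
  have s2sq : Real.sqrt (1-x^2)^2 = 1-x^2 := Real.sq_sqrt h2pos.le
  have s1sq : Real.sqrt (1-x)^2 = 1-x := Real.sq_sqrt h1pos.le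
  have hA : HasDerivAt (fun ρ:ℝ => 1 - ρ^2) (-(2*x)) x := by
    simpa using (hasDerivAt_pow 2 x).const_sub 1
  have hsq : HasDerivAt (fun ρ:ℝ => Real.sqrt (1-ρ^2))
      (1/(2*Real.sqrt (1-x^2)) * (-(2*x))) x := by
    exact_mod_cast (Real.hasDerivAt_sqrt h2pos.ne').comp x hA
  have harc := Real.hasDerivAt_arccos hl.ne' hr.ne
  have hmul : HasDerivAt (fun ρ:ℝ => ρ * Real.arccos ρ)
      (1*Real.arccos x + x*(-(1/Real.sqrt (1-x^2)))) x := (hasDerivAt_id x).mul harc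
  have h1x : HasDerivAt (fun ρ:ℝ => 1 - ρ) (-1) x := by
    simpa using (hasDerivAt_id x).const_sub 1
  have hsq2 : HasDerivAt (fun ρ:ℝ => Real.sqrt (1-ρ))
      (1/(2*Real.sqrt (1-x)) * (-1)) x :=
    (Real.hasDerivAt_sqrt h1pos.ne').comp x h1x
  have hprod := h1x.mul hsq2
  have := (hsq.sub hmul).sub ((hprod).const_mul (2*Real.sqrt 2/3))
  refine HasDerivAt.congr_deriv this ?_
  have e1 : (1-x) * (1/(2*Real.sqrt (1-x)) * -1) = -(Real.sqrt (1-x)/2) := by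
    field_simp; linarith [s1sq]
  rw [e1]
  field_simp
  ring

lemma hasDeriv_G {x : ℝ} (hx : x ∈ Set.Ioo (-1:ℝ) 1) :
    HasDerivAt (fun ρ => π*(1-ρ) - (Real.sqrt (1-ρ^2) - ρ*Real.arccos ρ))
      (-π + Real.arccos x) x := by
  obtain ⟨hl, hr⟩ := hx
  have h2pos : 0 < 1 - x^2 := by nlinarith
  have s2pos : 0 < Real.sqrt (1-x^2) := Real.sqrt_pos.2 h2pos
  have hA : HasDerivAt (fun ρ:ℝ => 1 - ρ^2) (-(2*x)) x := by
    simpa using (hasDerivAt_pow 2 x).const_sub 1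
  have hsq : HasDerivAt (fun ρ:ℝ => Real.sqrt (1-ρ^2))
      (1/(2*Real.sqrt (1-x^2)) * (-(2*x))) x := by
    exact_mod_cast (Real.hasDerivAt_sqrt h2pos.ne').comp x hA
  have harc := Real.hasDerivAt_arccos hl.ne' hr.ne
  have hmul : HasDerivAt (fun ρ:ℝ => ρ * Real.arccos ρ)
      (1*Real.arccos x + x*(-(1/Real.sqrt (1-x^2)))) x := (hasDerivAt_id x).mul harc
  have h1x : HasDerivAt (fun ρ:ℝ => π*(1 - ρ)) (π*(-1)) x := by
    exact (by simpa using (hasDerivAt_id x).const_sub 1 : HasDerivAt (fun ρ:ℝ => 1-ρ) (-1) x).const_mul π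
  have := h1x.sub (hsq.sub hmul)
  refine HasDerivAt.congr_deriv this ?_
  field_simp
  ring

lemma key_lb {ρ : ℝ} (hρ : ρ ∈ Set.Icc (-1:ℝ) 1) :
    (2*Real.sqrt 2/3)*((1-ρ)*Real.sqrt (1-ρ))
      ≤ Real.sqrt (1-ρ^2) - ρ*Real.arccos ρ := by
  have hF : AntitoneOn (fun ρ => Real.sqrt (1-ρ^2) - ρ*Real.arccos ρ
      - (2*Real.sqrt 2/3)*((1-ρ)*Real.sqrt (1-ρ))) (Set.Icc (-1:ℝ) 1) := by
    apply antitoneOn_of_deriv_nonpos (convex_Icc _ _)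
    · refine Continuous.continuousOn ?_
      have c1 : Continuous fun ρ:ℝ => Real.sqrt (1-ρ^2) :=
        Real.continuous_sqrt.comp (by continuity)
      have c2 : Continuous fun ρ:ℝ => ρ * Real.arccos ρ :=
        continuous_id.mul Real.continuous_arccos
      have c3 : Continuous fun ρ:ℝ => (1-ρ)*Real.sqrt (1-ρ) :=
        ((continuous_const.sub continuous_id)).mul (Real.continuous_sqrt.comp (by continuity))
      fun_prop
    · rw [interior_Icc]
      exact fun x hx => (hasDeriv_F hx).differentiableAt.differentiableWithinAt
    · rw [interior_Icc]
      intro x hx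
      rw [(hasDeriv_F hx).deriv]
      have := arccos_lb hx.1.le hx.2.le
      linarith
  have h1 : (fun ρ => Real.sqrt (1-ρ^2) - ρ*Real.arccos ρ
      - (2*Real.sqrt 2/3)*((1-ρ)*Real.sqrt (1-ρ))) 1 = 0 := by
    simp [Real.arccos_one]
  have := hF hρ (Set.right_mem_Icc.2 (by norm_num)) hρ.2
  rw [h1] at this
  simpa [sub_nonneg] using this

lemma key_ub {ρ : ℝ} (hρ : ρ ∈ Set.Icc (-1:ℝ) 1) :
    Real.sqrt (1-ρ^2) - ρ*Real.arccos ρ ≤ π*(1-ρ) := by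
  have hG : AntitoneOn (fun ρ => π*(1-ρ) - (Real.sqrt (1-ρ^2) - ρ*Real.arccos ρ))
      (Set.Icc (-1:ℝ) 1) := by
    apply antitoneOn_of_deriv_nonpos (convex_Icc _ _)
    · refine Continuous.continuousOn ?_
      have c1 : Continuous fun ρ:ℝ => Real.sqrt (1-ρ^2) :=
        Real.continuous_sqrt.comp (by continuity)
      have c2 : Continuous fun ρ:ℝ => ρ * Real.arccos ρ :=
        continuous_id.mul Real.continuous_arccos
      have c3 : Continuous fun ρ:ℝ => (1-ρ)*Real.sqrt (1-ρ) :=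
        ((continuous_const.sub continuous_id)).mul (Real.continuous_sqrt.comp (by continuity))
      fun_prop
    · rw [interior_Icc]
      exact fun x hx => (hasDeriv_G hx).differentiableAt.differentiableWithinAt
    · rw [interior_Icc]
      intro x hx
      rw [(hasDeriv_G hx).deriv]
      have := Real.arccos_le_pi x
      linarith
  have h1 : (fun ρ => π*(1-ρ) - (Real.sqrt (1-ρ^2) - ρ*Real.arccos ρ)) 1 = 0 := by
    simp [Real.arccos_one]
  have := hG hρ (Set.right_mem_Icc.2 (by norm_num)) hρ.2
  rw [h1] at this
  simpa [sub_nonneg] using this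

set_option maxHeartbeats 1000000 in
theorem corr_recursion_upper_bound (ρ₀ : ℝ) (hρ₀ : ρ₀ ∈ Set.Icc (-1 : ℝ) 1)
    (ρs : ℕ → ℝ) (h0 : ρs 0 = ρ₀)
    (hrec : ∀ ℓ : ℕ, ρs (ℓ + 1)
      = ρs ℓ + (1 / π) * (Real.sqrt (1 - ρs ℓ ^ 2) - ρs ℓ * Real.arccos (ρs ℓ))) :
    ∃ C > 0, ∀ ℓ : ℕ, 1 ≤ ℓ → 1 - ρs ℓ ≤ C / (ℓ : ℝ) ^ 2 := by
  have hπ : (0:ℝ) < π := Real.pi_pos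
  have hs2 : Real.sqrt 2 ^ 2 = 2 := Real.sq_sqrt (by norm_num)
  have hs2pos : (0:ℝ) < Real.sqrt 2 := Real.sqrt_pos.2 (by norm_num)
  set k : ℝ := 1/π * (2*Real.sqrt 2/3) with hkdef
  have kpos : 0 < k := by positivity
  have hk3 : k * π = 2*Real.sqrt 2/3 := by rw [hkdef]; field_simp
  refine ⟨9*π^2/2, by positivity, ?_⟩
  -- membership in [-1,1]
  have hmem : ∀ ℓ, ρs ℓ ∈ Set.Icc (-1:ℝ) 1 := by
    intro ℓ
    induction ℓ with
    | zero => rwa [h0]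
    | succ n ih =>
      have hlb := key_lb ih
      have hub := key_ub ih
      have h1n : 0 ≤ 1 - ρs n := by linarith [ih.2]
      have hg0 : 0 ≤ Real.sqrt (1 - ρs n ^ 2) - ρs n * Real.arccos (ρs n) := by
        refine le_trans ?_ hlb
        positivity
      constructor
      · rw [hrec]
        have : 0 ≤ (1/π) * (Real.sqrt (1 - ρs n ^ 2) - ρs n * Real.arccos (ρs n)) :=
          mul_nonneg (by positivity) hg0
        linarith [ih.1]
      · rw [hrec]
        have h2 : (1/π) * (Real.sqrt (1 - ρs n ^ 2) - ρs n * Real.arccos (ρs n))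
            ≤ (1/π) * (π * (1 - ρs n)) :=
          mul_le_mul_of_nonneg_left hub (by positivity)
        have h3 : (1/π) * (π * (1 - ρs n)) = 1 - ρs n := by field_simp
        linarith
  -- decrement lower bound
  have hdec : ∀ ℓ, 1 - ρs (ℓ+1)
      ≤ (1 - ρs ℓ) - k * ((1 - ρs ℓ) * Real.sqrt (1 - ρs ℓ)) := by
    intro ℓ
    have hlb := key_lb (hmem ℓ)
    have h2 : (1/π) * ((2*Real.sqrt 2/3)*((1 - ρs ℓ) * Real.sqrt (1 - ρs ℓ)))
        ≤ (1/π) * (Real.sqrt (1 - ρs ℓ ^ 2) - ρs ℓ * Real.arccos (ρs ℓ)) :=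
      mul_le_mul_of_nonneg_left hlb (by positivity)
    have h3 : (1/π) * ((2*Real.sqrt 2/3)*((1 - ρs ℓ) * Real.sqrt (1 - ρs ℓ)))
        = k * ((1 - ρs ℓ) * Real.sqrt (1 - ρs ℓ)) := by
      rw [hkdef]; ring
    rw [hrec]
    rw [h3] at h2
    linarith
  have hmono : ∀ ℓ, 1 - ρs (ℓ+1) ≤ 1 - ρs ℓ := by
    intro ℓ
    have h1n : 0 ≤ 1 - ρs ℓ := by linarith [(hmem ℓ).2]
    have : 0 ≤ k * ((1 - ρs ℓ) * Real.sqrt (1 - ρs ℓ)) := by positivity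
    linarith [hdec ℓ]
  -- main induction claim
  have claim : ∀ ℓ : ℕ, 0 < 1 - ρs ℓ →
      (k/2) * ℓ ≤ 1 / Real.sqrt (1 - ρs ℓ) := by
    intro ℓ
    induction ℓ with
    | zero =>
      intro h
      have h1 : (0:ℝ) ≤ 1 / Real.sqrt (1 - ρs 0) := by positivity
      simpa using h1
    | succ n ih =>
      intro hb
      have ha : 0 < 1 - ρs n := lt_of_lt_of_le hb (hmono n)
      have ihn := ih ha
      have hdn := hdec n
      set a := 1 - ρs n with hadef
      set b := 1 - ρs (n+1) with hbdef
      set sa := Real.sqrt a with hsadef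
      set sb := Real.sqrt b with hsbdef
      have sapos : 0 < sa := Real.sqrt_pos.2 ha
      have sbpos : 0 < sb := Real.sqrt_pos.2 hb
      have sasq : sa^2 = a := Real.sq_sqrt ha.le
      have sbsq : sb^2 = b := Real.sq_sqrt hb.le
      have hba : sb ≤ sa := Real.sqrt_le_sqrt (hmono n)
      have hd : k * (sa^2 * sa) ≤ sa^2 - sb^2 := by
        rw [sasq, sbsq]
        linarith [hdn]
      have e1 : k * (sa^2*sa) ≤ (sa - sb)*(sa + sb) := by nlinarith [hd]
      have e3 : k * (sa^2*sa) ≤ (sa - sb)*(2*sa) := by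
        have h5 : (sa - sb)*(sa+sb) ≤ (sa - sb)*(2*sa) :=
          mul_le_mul_of_nonneg_left (by linarith) (sub_nonneg.2 hba)
        linarith
      have e4 : (k/2)*sa^2 ≤ sa - sb := by
        have h2sa : (0:ℝ) < 2*sa := by linarith
        have h6 : (k/2)*sa^2*(2*sa) ≤ (sa - sb)*(2*sa) := by nlinarith [e3]
        exact le_of_mul_le_mul_right h6 h2sa
      have key : (k/2)*(sa*sb) ≤ sa - sb := by
        have h7 : sa*sb ≤ sa^2 := by nlinarith [mul_le_mul_of_nonneg_left hba sapos.le]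
        have := mul_le_mul_of_nonneg_left h7 (by positivity : (0:ℝ) ≤ k/2)
        linarith
      have heq : 1/sb - 1/sa = (sa - sb)/(sa*sb) := by
        rw [div_sub_div _ _ sbpos.ne' sapos.ne', one_mul, mul_one, mul_comm]
      have hfrac : (k/2) ≤ (sa - sb)/(sa*sb) :=
        (le_div_iff₀ (by positivity)).2 key
      rw [← heq] at hfrac
      push_cast
      calc (k/2) * ((n:ℝ)+1) = (k/2) * n + k/2 := by ring
        _ ≤ 1/sa + k/2 := by linarith
        _ ≤ 1/sb := by linarith
  -- conclude
  intro ℓ hℓ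
  have hℓR : (1:ℝ) ≤ (ℓ:ℝ) := by exact_mod_cast hℓ
  have hℓpos : (0:ℝ) < (ℓ:ℝ) := by linarith
  by_cases hp : 0 < 1 - ρs ℓ
  · have h1 := claim ℓ hp
    have spos : 0 < Real.sqrt (1 - ρs ℓ) := Real.sqrt_pos.2 hp
    have ssq : Real.sqrt (1 - ρs ℓ)^2 = 1 - ρs ℓ := Real.sq_sqrt hp.le
    rw [le_div_iff₀ spos] at h1
    have e : Real.sqrt 2 = 3/2*(k*π) := by rw [hk3]; ring
    have h2' : Real.sqrt 2 * ℓ * Real.sqrt (1 - ρs ℓ) ≤ 3*π := by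
      calc Real.sqrt 2 * ℓ * Real.sqrt (1 - ρs ℓ)
          = 3*(π*(k/2*ℓ*Real.sqrt (1 - ρs ℓ))) := by rw [e]; ring
        _ ≤ 3*(π*1) := by
            have := mul_le_mul_of_nonneg_left h1 hπ.le
            linarith
        _ = 3*π := by ring
    have hfin : Real.sqrt (1 - ρs ℓ)^2 * (ℓ:ℝ)^2 ≤ 9*π^2/2 := by
      nlinarith [mul_le_mul h2' h2' (by positivity) (by positivity : (0:ℝ) ≤ 3*π), hs2,
        spos, hℓpos]
    rw [ssq] at hfin
    exact (le_div_iff₀ (pow_pos hℓpos 2)).2 hfin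
  · push_neg at hp
    refine le_trans hp ?_
    positivity
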